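/- arXiv:math/0110325 — 2 statements merged into one kernel-verified Lean document; each statement's English description precedes it below -/
import Mathlib

section
/- Let B ∈ O(n), let L be a full lattice in ℝⁿ with B(L) = L, and set W := ker(B − I). Then the dual lattice of L ∩ W computed inside W equals the orthogonal projection of the dual lattice L* onto W; that is, {μ ∈ W : ⟨μ, λ⟩ ∈ ℤ for all λ ∈ L ∩ W} = p_B(L*), where p_B is the orthogonal projection of ℝⁿ onto W. -/
/-
STATEMENT 2: for B ∈ O(n) and a B-stable full lattice L in ℝⁿ, with W := ker(B − I),
the dual lattice of L ∩ W computed inside W equals p_B(L*):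
{μ ∈ W : ⟨μ, λ⟩ ∈ ℤ for all λ ∈ L ∩ W} = p_B(L*).
-/

noncomputable section

open scoped InnerProductSpace

/-- Euclidean `n`-space `ℝⁿ`. -/
abbrev Euc (n : ℕ) := EuclideanSpace ℝ (Fin n)

/-- The fixed subspace `ker (B - I)` of an orthogonal transformation `B ∈ O(n)`. -/
def fixSubmodule {n : ℕ} (B : Euc n ≃ₗᵢ[ℝ] Euc n) : Submodule ℝ (Euc n) :=
  LinearMap.ker ((B.toLinearEquiv : Euc n →ₗ[ℝ] Euc n) - LinearMap.id)

/-- `p_B`, the orthogonal projection of `ℝⁿ` onto `ker (B - I)`. -/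
def pB {n : ℕ} (B : Euc n ≃ₗᵢ[ℝ] Euc n) (x : Euc n) : Euc n :=
  ((fixSubmodule B).orthogonalProjectionOnto x : Euc n)

/-- `Λ` is a full lattice in `ℝⁿ`: the `ℤ`-span of an `ℝ`-basis of `ℝⁿ`. -/
def IsFullLattice {n : ℕ} (Λ : AddSubgroup (Euc n)) : Prop :=
  ∃ v : Module.Basis (Fin n) ℝ (Euc n),
    (Λ : Set (Euc n)) = (Submodule.span ℤ (Set.range ⇑v) : Set (Euc n))

/-!
Write `W` for the fixed space of `B`, `M = L ∩ W` and `P = p_B(L*)`. For `ν ∈ L*` and `y ∈ W`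
one has `⟪p_B ν, y⟫ = ⟪ν, y⟫`, which gives `P ⊆ M*` (duals taken inside `W`) and, together with
`L** = L`, `P* = M`. As an isometry preserving the discrete lattice `L`, `B` has finite order `m`,
and `m • p_B l = ∑_{k<m} B^k l ∈ M` for `l ∈ L`; so `M` spans `W` and is a lattice in `W`. Then
`M*` is a lattice, hence so is `P ⊆ M*`, and `M* = P** = P`.
-/

open Submodule

section DualLattice

variable {E : Type*} [NormedAddCommGroup E] [InnerProductSpace ℝ E]

theorem innerₗ_nondegenerate : LinearMap.BilinForm.Nondegenerate (innerₗ E) :=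
  ⟨fun x hx => inner_self_eq_zero.mp (hx x), fun x hx => inner_self_eq_zero.mp (hx x)⟩

def dualLattice (L : Submodule ℤ E) : Submodule ℤ E :=
  LinearMap.BilinForm.dualSubmodule (innerₗ E) L

theorem mem_dualLattice {L : Submodule ℤ E} {x : E} :
    x ∈ dualLattice L ↔ ∀ y ∈ L, ∃ k : ℤ, ⟪x, y⟫_ℝ = k := by
  simp only [dualLattice, LinearMap.BilinForm.mem_dualSubmodule, mem_one, innerₗ_apply_apply,
    algebraMap_int_eq, eq_intCast, eq_comm]

variable [FiniteDimensional ℝ E] (L : Submodule ℤ E) [DiscreteTopology L] [IsZLattice ℝ L]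

def latticeBasis : Module.Basis (Module.Free.ChooseBasisIndex ℤ L) ℝ E :=
  (Module.Free.chooseBasis ℤ L).ofZLatticeBasis ℝ L

theorem latticeBasis_mem (i : Module.Free.ChooseBasisIndex ℤ L) : latticeBasis L i ∈ L := by
  rw [latticeBasis, Module.Basis.ofZLatticeBasis_apply]
  exact SetLike.coe_mem _

theorem span_latticeBasis : span ℤ (Set.range (latticeBasis L)) = L :=
  (Module.Free.chooseBasis ℤ L).ofZLatticeBasis_span ℝ

theorem dualLattice_eq_span_dualBasis [DecidableEq (Module.Free.ChooseBasisIndex ℤ L)] :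
    dualLattice L = span ℤ (Set.range
      (LinearMap.BilinForm.dualBasis (innerₗ E) innerₗ_nondegenerate (latticeBasis L))) := by
  conv_lhs => rw [← span_latticeBasis L]
  exact LinearMap.BilinForm.dualSubmodule_span_of_basis _ _ _

instance : DiscreteTopology (dualLattice L) := by
  classical
  rw [dualLattice_eq_span_dualBasis]
  infer_instance

instance : IsZLattice ℝ (dualLattice L) :=
  ⟨by classical rw [dualLattice_eq_span_dualBasis]; exact ZSpan.span_top _⟩

theorem dualLattice_dualLattice : dualLattice (dualLattice L) = L := by
  have h := LinearMap.BilinForm.dualSubmodule_dualSubmodule_of_basis (R := ℤ) (innerₗ E)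
    innerₗ_nondegenerate (LinearMap.BilinForm.isSymm_iff.mpr isSymm_inner) (latticeBasis L)
  rwa [span_latticeBasis] at h

end DualLattice

section Projection

variable {E : Type*} [NormedAddCommGroup E] [InnerProductSpace ℝ E]
  (L : Submodule ℤ E) (K : Submodule ℝ E) [K.HasOrthogonalProjection]

abbrev orthogonalProjectionℤ : E →ₗ[ℤ] K :=
  (K.orthogonalProjectionOnto : E →ₗ[ℝ] K).restrictScalars ℤ

theorem map_dualLattice_le_dualLattice_comap :
    (dualLattice L).map (orthogonalProjectionℤ K) ≤
      dualLattice (ZLattice.comap ℝ L K.subtype) := by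
  intro _ h
  obtain ⟨ν, hν, rfl⟩ := mem_map.mp h
  rw [mem_dualLattice] at hν ⊢
  intro y hy
  simpa only [orthogonalProjectionℤ, LinearMap.coe_restrictScalars, ContinuousLinearMap.coe_coe,
    inner_orthogonalProjectionOnto_eq_of_mem_right] using hν y hy

theorem span_map_orthogonalProjectionℤ_eq_top (hL : span ℝ (L : Set E) = ⊤) :
    span ℝ (L.map (orthogonalProjectionℤ K) : Set K) = ⊤ := by
  have hsurj : Function.Surjective K.orthogonalProjectionOnto := fun y =>
    ⟨y, K.orthogonalProjectionOnto_mem_subspace_eq_self y⟩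
  rw [map_coe, LinearMap.coe_restrictScalars, span_image, hL, Submodule.map_top,
    LinearMap.range_eq_top.mpr hsurj]

variable [FiniteDimensional ℝ E] [DiscreteTopology L] [IsZLattice ℝ L]

theorem dualLattice_map_orthogonalProjectionℤ :
    dualLattice ((dualLattice L).map (orthogonalProjectionℤ K)) =
      ZLattice.comap ℝ L K.subtype := by
  ext x
  have key : x ∈ dualLattice ((dualLattice L).map (orthogonalProjectionℤ K)) ↔
      (x : E) ∈ dualLattice (dualLattice L) := by
    simp only [mem_dualLattice, mem_map, forall_exists_index, and_imp, forall_apply_eq_imp_iff₂,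
      orthogonalProjectionℤ, LinearMap.coe_restrictScalars, ContinuousLinearMap.coe_coe,
      inner_orthogonalProjectionOnto_eq_of_mem_left]
  rw [key, dualLattice_dualLattice]
  rfl

theorem dualLattice_comap_subtype_eq_map
    (hLK : span ℝ (ZLattice.comap ℝ L K.subtype : Set K) = ⊤) :
    dualLattice (ZLattice.comap ℝ L K.subtype) = (dualLattice L).map (orthogonalProjectionℤ K) := by
  have : DiscreteTopology (ZLattice.comap ℝ L K.subtype) :=
    ZLattice.comap_discreteTopology ℝ L K.subtypeL.continuous K.injective_subtype
  have : IsZLattice ℝ (ZLattice.comap ℝ L K.subtype) := ⟨hLK⟩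
  have : DiscreteTopology ((dualLattice L).map (orthogonalProjectionℤ K)) :=
    DiscreteTopology.of_subset
      (inferInstanceAs (DiscreteTopology (dualLattice (ZLattice.comap ℝ L K.subtype))))
      (map_dualLattice_le_dualLattice_comap L K)
  have : IsZLattice ℝ ((dualLattice L).map (orthogonalProjectionℤ K)) :=
    ⟨span_map_orthogonalProjectionℤ_eq_top _ K IsZLattice.span_top⟩
  rw [← dualLattice_map_orthogonalProjectionℤ, dualLattice_dualLattice]

theorem dual_inter_eq_image_starProjection
    (hLK : span ℝ (ZLattice.comap ℝ L K.subtype : Set K) = ⊤) :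
    {μ : E | μ ∈ K ∧ ∀ l : E, l ∈ L → l ∈ K → ∃ k : ℤ, ⟪μ, l⟫_ℝ = k} =
      K.starProjection '' dualLattice L := by
  ext μ
  constructor
  · rintro ⟨hμK, hμ⟩
    have : (⟨μ, hμK⟩ : K) ∈ dualLattice (ZLattice.comap ℝ L K.subtype) :=
      mem_dualLattice.mpr fun y hy => hμ y hy y.2
    rw [dualLattice_comap_subtype_eq_map L K hLK] at this
    obtain ⟨ν, hν, hνμ⟩ := mem_map.mp this
    exact ⟨ν, hν, congrArg Subtype.val hνμ⟩
  · rintro ⟨ν, hν, rfl⟩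
    have := map_dualLattice_le_dualLattice_comap L K (mem_map_of_mem hν)
    exact ⟨K.starProjection_apply_mem ν, fun l hl hlK => mem_dualLattice.mp this ⟨l, hlK⟩ hl⟩

end Projection

section FixedSubspace

variable {E : Type*} [NormedAddCommGroup E] [InnerProductSpace ℝ E] (B : E ≃ₗᵢ[ℝ] E)

theorem LinearIsometryEquiv.exists_iterate_eq_id_of_mapsTo_lattice [FiniteDimensional ℝ E]
    (L : Submodule ℤ E) [DiscreteTopology L] [IsZLattice ℝ L] (hBL : Set.MapsTo B L L) :
    ∃ m, 0 < m ∧ (⇑B)^[m] = id := by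
  obtain ⟨R, hR⟩ := Finite.exists_le fun i => ‖latticeBasis L i‖
  set Φ := Metric.closedBall (0 : E) R ∩ L
  have hΦ : Φ.Finite := by
    simpa only [Φ, span_latticeBasis] using
      ZSpan.setFinite_inter (latticeBasis L) (Metric.isBounded_closedBall (x := (0 : E)) (r := R))
  have hΦspan : span ℝ Φ = ⊤ := by
    refine eq_top_iff.mpr ((latticeBasis L).span_eq.ge.trans (span_mono ?_))
    rintro _ ⟨i, rfl⟩
    exact ⟨by simpa using hR i, latticeBasis_mem L i⟩
  have hBΦ : Set.MapsTo B.toLinearEquiv Φ Φ := fun x hx =>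
    ⟨by simpa using hx.1, hBL hx.2⟩
  obtain ⟨m, hm, hBm⟩ :=
    (LinearEquiv.isOfFinOrder_of_finite_of_span_eq_top_of_mapsTo hΦ hΦspan hBΦ).exists_pow_eq_one
  exact ⟨m, hm, by simpa [LinearEquiv.coe_pow] using congrArg DFunLike.coe hBm⟩

variable {B} {K : Submodule ℝ E} [K.HasOrthogonalProjection]

theorem LinearIsometryEquiv.smul_starProjection_eq_sum_iterate (hK : ∀ x, x ∈ K ↔ B x = x)
    {m : ℕ} (hm : 0 < m) (hBm : (⇑B)^[m] = id) (x : E) :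
    (m : ℝ) • K.starProjection x = ∑ k ∈ Finset.range m, (⇑B)^[k] x := by
  set s := ∑ k ∈ Finset.range m, (⇑B)^[k] x
  have hs : s ∈ K := by
    have h := (Finset.sum_range_succ' (fun k => (⇑B)^[k] x) m).symm.trans
      (Finset.sum_range_succ (fun k => (⇑B)^[k] x) m)
    rw [hBm, id, Function.iterate_zero_apply] at h
    rw [hK, map_sum]
    simpa only [Function.iterate_succ_apply'] using add_right_cancel h
  have hinner : ∀ k, ∀ w ∈ K, ⟪(⇑B)^[k] x, w⟫_ℝ = ⟪x, w⟫_ℝ := by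
    intro k w hw
    induction k with
    | zero => rfl
    | succ k ih =>
      rw [Function.iterate_succ_apply', ← ih]
      conv_lhs => rw [← (hK w).mp hw]
      exact B.inner_map_map _ _
  have hm' : (m : ℝ) ≠ 0 := by positivity
  have hproj : K.starProjection x = (m : ℝ)⁻¹ • s := by
    refine K.eq_starProjection_of_mem_of_inner_eq_zero (K.smul_mem _ hs) fun w hw => ?_
    rw [inner_sub_left, real_inner_smul_left, sum_inner,
      Finset.sum_congr rfl fun k _ => hinner k w hw, Finset.sum_const, Finset.card_range,
      nsmul_eq_mul, ← mul_assoc, inv_mul_cancel₀ hm', one_mul, sub_self]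
  rw [hproj, smul_inv_smul₀ hm']

theorem LinearIsometryEquiv.span_comap_fixed_eq_top [FiniteDimensional ℝ E] (L : Submodule ℤ E)
    [DiscreteTopology L] [IsZLattice ℝ L] (hBL : Set.MapsTo B L L) (hK : ∀ x, x ∈ K ↔ B x = x) :
    span ℝ (ZLattice.comap ℝ L K.subtype : Set K) = ⊤ := by
  obtain ⟨m, hm, hBm⟩ := B.exists_iterate_eq_id_of_mapsTo_lattice L hBL
  have hmul : ∀ l ∈ L, m • K.orthogonalProjectionOnto l ∈ ZLattice.comap ℝ L K.subtype := by
    intro l hl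
    change ((m • K.orthogonalProjectionOnto l : K) : E) ∈ L
    rw [coe_smul_of_tower, ← Nat.cast_smul_eq_nsmul ℝ, ← starProjection_apply,
      B.smul_starProjection_eq_sum_iterate hK hm hBm]
    exact sum_mem fun k _ => hBL.iterate k hl
  rw [eq_top_iff, ← span_map_orthogonalProjectionℤ_eq_top L K IsZLattice.span_top, span_le]
  rintro _ ⟨l, hl, rfl⟩
  have hm' : (m : ℝ) ≠ 0 := by positivity
  simpa [← Nat.cast_smul_eq_nsmul ℝ, hm'] using
    smul_mem (span ℝ _) ((m : ℝ)⁻¹) (subset_span (hmul l hl))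

end FixedSubspace

theorem dual_lattice_of_fixed_sublattice_eq_projection_of_dual
    {n : ℕ} (B : Euc n ≃ₗᵢ[ℝ] Euc n) (L : AddSubgroup (Euc n))
    (hL : IsFullLattice L) (hBL : ∀ x : Euc n, x ∈ L ↔ B x ∈ L) :
    {μ : Euc n | μ ∈ fixSubmodule B ∧
        ∀ l : Euc n, l ∈ L → l ∈ fixSubmodule B → ∃ k : ℤ, ⟪μ, l⟫_ℝ = (k : ℝ)}
      = pB B '' {μ : Euc n | ∀ l ∈ L, ∃ k : ℤ, ⟪μ, l⟫_ℝ = (k : ℝ)} := by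
  obtain ⟨v, hv⟩ := hL
  have hmem : ∀ x, x ∈ L ↔ x ∈ span ℤ (Set.range v) := Set.ext_iff.mp hv
  have hfix : ∀ x, x ∈ fixSubmodule B ↔ B x = x := fun x => by
    simp [fixSubmodule, sub_eq_zero]
  have hBΛ : Set.MapsTo B (span ℤ (Set.range v)) (span ℤ (Set.range v)) := fun x hx =>
    (hmem _).mp ((hBL x).mp ((hmem x).mpr hx))
  have hpB : pB B = (fixSubmodule B).starProjection := rfl
  have hdual : {μ | ∀ l ∈ span ℤ (Set.range v), ∃ k : ℤ, ⟪μ, l⟫_ℝ = k} =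
      dualLattice (span ℤ (Set.range v)) := Set.ext fun _ => mem_dualLattice.symm
  simp only [hmem]
  rw [hpB, hdual]
  exact dual_inter_eq_image_starProjection _ _ (B.span_comap_fixed_eq_top _ hBΛ hfix)
end
end

section
/- Let N ≥ 1, let (d₁, a₁), …, (d_N, a_N) be pairwise distinct pairs with d_i nonnegative integers and a_i nonnegative reals, let c₁, …, c_N ∈ ℝ, and let ε > 0. If Σ_{i=1}^{N} c_i s^{−d_i/2} e^{−a_i/(4s)} = 0 for all s ∈ (0, ε), then c_i = 0 for every i. In other words, the functions s ↦ s^{−d/2} e^{−a/(4s)} on (0, ε), for distinct pairs (d, a), are linearly independent over ℝ. -/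
/-!
Order the pairs `(a, d)` by `a` increasing, then `d` decreasing. As `s → 0⁺`, each heat term
`s^(-d/2) e^(-a/(4s))` is little-o of every heat term preceding it in this order: the ratio is
`s^((d - d')/2) e^(-(a' - a)/(4s))`, killed by the exponential when `a < a'` and by the power when
`a = a'`, `d' < d`. In a vanishing combination, the least pair with a nonzero coefficient therefore
dominates all the others, which forces its coefficient to be zero.
-/

open Filter Topology Asymptotics Real

theorem eq_zero_of_eventually_sum_mul_eq_zero {ι α β : Type*} [Fintype ι] [LinearOrder β]
    {l : Filter α} {f : ι → α → ℝ} (key : ι → β) (hkey : Function.Injective key)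
    (hf : ∀ i, ∃ᶠ x in l, f i x ≠ 0) (hlt : ∀ i j, key i < key j → f j =o[l] f i)
    {c : ι → ℝ} (hc : (fun x => ∑ i, c i * f i x) =ᶠ[l] 0) : c = 0 := by
  classical
  by_contra hne
  obtain ⟨i₀, hi₀, hmin⟩ := (Finset.univ.filter (c · ≠ 0)).exists_min_image key <| by
    simpa [Finset.filter_nonempty_iff, funext_iff] using hne
  simp only [Finset.mem_filter, Finset.mem_univ, true_and] at hi₀ hmin
  have hrest : (fun x => ∑ j ∈ Finset.univ.erase i₀, c j * f j x) =o[l] f i₀ := by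
    refine IsLittleO.fun_sum fun j hj => ?_
    by_cases hcj : c j = 0
    · simp [hcj]
    · have hlt' := (hmin j hcj).lt_of_ne (hkey.ne (Finset.ne_of_mem_erase hj).symm)
      exact (hlt i₀ j hlt').const_mul_left (c j)
  have hsum : (fun x => ∑ i, c i * f i x) =o[l] f i₀ := (isLittleO_zero _ _).congr' hc.symm .rfl
  have hlead : (fun x => c i₀ * f i₀ x) =o[l] f i₀ := by
    refine (hsum.sub hrest).congr (fun x => ?_) fun _ => rfl
    rw [← Finset.add_sum_erase _ _ (Finset.mem_univ i₀), add_sub_cancel_right]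
  exact isLittleO_irrefl (hf i₀) ((isLittleO_const_mul_left_iff hi₀).mp hlead)

theorem tendsto_rpow_mul_exp_neg_div_nhdsGT_zero (r : ℝ) {b : ℝ} (hb : 0 < b) :
    Tendsto (fun s : ℝ => s ^ r * exp (-b / s)) (𝓝[>] 0) (𝓝 0) := by
  refine ((tendsto_rpow_mul_exp_neg_mul_atTop_nhds_zero (-r) b hb).comp
    tendsto_inv_nhdsGT_zero).congr' ?_
  filter_upwards [self_mem_nhdsWithin] with s (hs : 0 < s)
  simp [inv_rpow hs.le, rpow_neg hs.le, div_eq_mul_inv]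

theorem tendsto_rpow_nhdsGT_zero {r : ℝ} (hr : 0 < r) :
    Tendsto (fun s : ℝ => s ^ r) (𝓝[>] 0) (𝓝 0) := by
  simpa [zero_rpow hr.ne'] using
    ((continuousAt_rpow_const 0 r (.inr hr.le)).tendsto).mono_left nhdsWithin_le_nhds

noncomputable def heatTerm (d a s : ℝ) : ℝ := s ^ (-d / 2) * exp (-a / (4 * s))

theorem heatTerm_pos (d a : ℝ) {s : ℝ} (hs : 0 < s) : 0 < heatTerm d a s := by
  unfold heatTerm; positivity

theorem heatTerm_eq_mul_heatTerm (d a d' a' : ℝ) {s : ℝ} (hs : 0 < s) :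
    heatTerm d' a' s = s ^ ((d - d') / 2) * exp (-(a' - a) / (4 * s)) * heatTerm d a s := by
  unfold heatTerm
  rw [mul_mul_mul_comm, ← rpow_add hs, ← exp_add]
  congr 2 <;> ring

theorem heatTerm_isLittleO {d a d' a' : ℝ} (h : a < a' ∨ a = a' ∧ d' < d) :
    heatTerm d' a' =o[𝓝[>] 0] heatTerm d a := by
  have hratio :
      Tendsto (fun s => s ^ ((d - d') / 2) * exp (-(a' - a) / (4 * s))) (𝓝[>] 0) (𝓝 0) := by
    rcases h with ha | ⟨rfl, hd⟩
    · convert tendsto_rpow_mul_exp_neg_div_nhdsGT_zero ((d - d') / 2)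
        (by linarith : 0 < (a' - a) / 4) using 4 with s
      ring
    · simpa using tendsto_rpow_nhdsGT_zero (by linarith : 0 < (d - d') / 2)
  refine (((isLittleO_one_iff ℝ).mpr hratio).mul_isBigO (isBigO_refl (heatTerm d a) _)).congr' ?_
    (by simp)
  filter_upwards [self_mem_nhdsWithin] with s (hs : 0 < s)
  exact (heatTerm_eq_mul_heatTerm d a d' a' hs).symm

theorem linear_independence_of_heat_terms_general
    (N : ℕ) (d : Fin N → ℕ) (a : Fin N → ℝ)
    (hdist : ∀ i j : Fin N, i ≠ j → (d i, a i) ≠ (d j, a j))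
    (c : Fin N → ℝ) (ε : ℝ) (hε : 0 < ε)
    (h : ∀ s : ℝ, 0 < s → s < ε →
      ∑ i : Fin N, c i * s ^ (-(d i : ℝ) / 2) * Real.exp (-(a i) / (4 * s)) = 0) :
    ∀ i : Fin N, c i = 0 := by
  have hkey : Function.Injective fun i => toLex (a i, OrderDual.toDual (d i : ℝ)) := by
    intro i j hij
    by_contra hne
    simp only [toLex_inj, Prod.mk.injEq, OrderDual.toDual_inj, Nat.cast_inj] at hij
    exact hdist i j hne (by rw [hij.1, hij.2])
  have hvanish : (fun s => ∑ i, c i * heatTerm (d i) (a i) s) =ᶠ[𝓝[>] 0] 0 := by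
    filter_upwards [Ioo_mem_nhdsGT hε] with s hs
    simpa [heatTerm, mul_assoc] using h s hs.1 hs.2
  have hpos (i : Fin N) : ∃ᶠ s in 𝓝[>] (0 : ℝ), heatTerm (d i) (a i) s ≠ 0 :=
    (eventually_mem_nhdsWithin.mono fun _ hs =>
      (heatTerm_pos _ _ (Set.mem_Ioi.mp hs)).ne').frequently
  refine congrFun (eq_zero_of_eventually_sum_mul_eq_zero _ hkey hpos (fun i j hij => ?_) hvanish)
  simp only [Prod.Lex.toLex_lt_toLex, OrderDual.toDual_lt_toDual] at hij
  exact heatTerm_isLittleO hij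

theorem linear_independence_of_heat_terms
    (N : ℕ) (hN : 1 ≤ N) (d : Fin N → ℕ) (a : Fin N → ℝ) (ha : ∀ i, 0 ≤ a i)
    (hdist : ∀ i j : Fin N, i ≠ j → (d i, a i) ≠ (d j, a j))
    (c : Fin N → ℝ) (ε : ℝ) (hε : 0 < ε)
    (h : ∀ s : ℝ, 0 < s → s < ε →
      ∑ i : Fin N, c i * s ^ (-(d i : ℝ) / 2) * Real.exp (-(a i) / (4 * s)) = 0) :
    ∀ i : Fin N, c i = 0 :=
  linear_independence_of_heat_terms_general N d a hdist c ε hε h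
end
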